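/- arXiv:1006.2493 — 2 statements merged into one kernel-verified Lean document; each statement's English description precedes it below -/
import Mathlib

section
/- Let G be a graph with minimum fitness counterexample properties such that G has a vertex v of degree 1 with neighbour z of degree at least 2. Then the graph G' = G \ {v} satisfies r(G') ≤ r(G) - 1/2 and D(G') ≥ D(G) - 1. -/
/-!
Deleting the leaf `v` only changes the degree of its neighbour `z`, from `d` to `d - 1`, so `r`
drops by `1 + 1/d - 1/(d - 1) ≥ 1/2`. Distances between the remaining vertices can only grow
in `G - v`, and `v` is within distance `1` of `z`, so `D(G) ≤ D(G - v) + 1`; here `G - v` is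
connected, so its diameter is not the junk value `0` of a disconnected graph.
-/

/-- The inverse degree `r(G) = ∑_v 1/deg(v)` of a finite graph. -/
noncomputable def invDeg {V : Type*} [Fintype V] (G : SimpleGraph V) : ℝ := by
  classical exact ∑ v : V, (1 : ℝ) / (G.degree v)

open Finset

lemma invDeg_eq_sum {V : Type*} [Fintype V] (G : SimpleGraph V) [∀ u, Fintype (G.neighborSet u)] :
    invDeg G = ∑ u, (1 : ℝ) / G.degree u := by
  unfold invDeg
  congr!

lemma one_div_sub_one_sub_one_div_le_half {d : ℝ} (hd : 2 ≤ d) : 1 / (d - 1) - 1 / d ≤ 1 / 2 := by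
  rw [div_sub_div _ _ (by linarith) (by linarith), div_le_div_iff₀ (by nlinarith) two_pos]
  nlinarith

namespace SimpleGraph

variable {V W : Type*} {G : SimpleGraph V}

lemma Hom.edist_le {H : SimpleGraph W} (f : G →g H) (a b : V) :
    H.edist (f a) (f b) ≤ G.edist a b := by
  by_cases hab : G.Reachable a b
  · obtain ⟨p, hp⟩ := hab.exists_walk_length_eq_edist
    rw [← hp, ← Walk.length_map f p]
    exact (p.map f).edist_le
  · rw [edist_eq_top_of_not_reachable hab]
    exact le_top

lemma ediam_le_ediam_induce_ne_add_one {v z : V} (hvz : G.Adj v z) :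
    G.ediam ≤ (G.induce {u | u ≠ v}).ediam + 1 := by
  set H := G.induce {u | u ≠ v}
  have hsub (a b : V) (ha : a ≠ v) (hb : b ≠ v) : G.edist a b ≤ H.ediam :=
    ((Embedding.induce _).toHom.edist_le ⟨a, ha⟩ ⟨b, hb⟩).trans edist_le_ediam
  have hleaf (b : V) (hb : b ≠ v) : G.edist v b ≤ H.ediam + 1 :=
    calc G.edist v b ≤ G.edist v z + G.edist z b := G.edist_triangle
      _ ≤ 1 + H.ediam := by
          gcongr
          · exact (edist_eq_one_iff_adj.mpr hvz).le
          · exact hsub z b hvz.ne' hb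
      _ = H.ediam + 1 := add_comm _ _
  refine ediam_le_of_edist_le fun a b => ?_
  obtain rfl | ha := eq_or_ne a v
  · obtain rfl | hb := eq_or_ne b a
    · simp
    · exact hleaf b hb
  · obtain rfl | hb := eq_or_ne b v
    · rw [edist_comm]
      exact hleaf a ha
    · exact (hsub a b ha hb).trans le_self_add

lemma diam_le_diam_add_one_of_ediam_le {H : SimpleGraph W} (h : G.ediam ≤ H.ediam + 1)
    (hH : H.ediam ≠ ⊤) : G.diam ≤ H.diam + 1 := by
  simpa [diam, ENat.toNat_add hH ENat.one_ne_top] using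
    ENat.toNat_le_toNat h (WithTop.add_ne_top.mpr ⟨hH, ENat.one_ne_top⟩)

variable [Fintype V] [DecidableEq V] [DecidableRel G.Adj]

lemma degree_induce_ne {v : V} (x : {u | u ≠ v}) :
    (G.induce {u | u ≠ v}).degree x = #((G.neighborFinset x).erase v) := by
  rw [← card_neighborFinset_eq_degree, ← card_map (.subtype _), map_neighborFinset_induce]
  congr 1
  ext
  simp [and_comm]

lemma invDeg_induce_ne_of_neighborSet_eq {v z : V} (hz : G.neighborSet v = {z}) :
    invDeg (G.induce {u | u ≠ v}) =
      invDeg G - 1 / G.degree v - 1 / G.degree z + 1 / ((G.degree z : ℝ) - 1) := by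
  have hvz : G.Adj v z := by simp [← mem_neighborSet, hz]
  set H := G.induce {u | u ≠ v}
  let z' : {u | u ≠ v} := ⟨z, hvz.ne'⟩
  have hdeg (x : {u | u ≠ v}) (hx : x ≠ z') : H.degree x = G.degree x := by
    have hxv : v ∉ G.neighborFinset x := fun h => by
      have hx' : (x : V) ∈ G.neighborSet v := ((mem_neighborFinset _ _ _).mp h).symm
      rw [hz] at hx'
      exact hx (Subtype.ext hx')
    rw [degree_induce_ne, erase_eq_of_notMem hxv, card_neighborFinset_eq_degree]
  have hdegz : (H.degree z' : ℝ) = G.degree z - 1 := by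
    have hz_pos : 1 ≤ G.degree z := (G.degree_pos_iff_exists_adj z).mpr ⟨v, hvz.symm⟩
    rw [degree_induce_ne, card_erase_of_mem ((mem_neighborFinset _ _ _).mpr hvz.symm),
      card_neighborFinset_eq_degree, Nat.cast_sub hz_pos, Nat.cast_one]
  have hsum : ∑ x : {u | u ≠ v}, (1 : ℝ) / H.degree x =
      ∑ x : {u | u ≠ v}, (1 : ℝ) / G.degree x + (1 / H.degree z' - 1 / G.degree z) := by
    rw [← sub_eq_iff_eq_add', ← sum_sub_distrib]
    exact Fintype.sum_eq_single z' fun x hx => by rw [hdeg x hx, sub_self]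
  have hsplit : ∑ u, (1 : ℝ) / G.degree u =
      1 / G.degree v + ∑ x : {u | u ≠ v}, (1 : ℝ) / G.degree x :=
    Fintype.sum_eq_add_sum_subtype_ne _ v
  rw [invDeg_eq_sum, invDeg_eq_sum, hsplit, hsum, hdegz]
  ring

end SimpleGraph

theorem remove_degree_one_vertex_general {V : Type*} [Fintype V] [DecidableEq V]
    (G : SimpleGraph V) [DecidableRel G.Adj] (hconn : G.Connected)
    (v z : V)
    (hdv : G.degree v = 1) (hz : G.neighborSet v = {z}) (hdz : 2 ≤ G.degree z) :
    invDeg (G.induce {u | u ≠ v}) ≤ invDeg G - 1 / 2 ∧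
      G.diam ≤ (G.induce {u | u ≠ v}).diam + 1 := by
  have hvz : G.Adj v z := by simp [← SimpleGraph.mem_neighborSet, hz]
  constructor
  · have hgap := one_div_sub_one_sub_one_div_le_half (d := G.degree z) (by exact_mod_cast hdz)
    rw [SimpleGraph.invDeg_induce_ne_of_neighborSet_eq hz, hdv]
    push_cast
    linarith
  · have hconn' : (G.induce {u | u ≠ v}).Connected :=
      hconn.induce_compl_singleton_of_degree_eq_one hdv
    have := hconn'.nonempty
    exact SimpleGraph.diam_le_diam_add_one_of_ediam_le
      (SimpleGraph.ediam_le_ediam_induce_ne_add_one hvz)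
      (SimpleGraph.connected_iff_ediam_ne_top.mp hconn')

theorem remove_degree_one_vertex {V : Type*} [Fintype V] [DecidableEq V]
    (G : SimpleGraph V) [DecidableRel G.Adj] (hconn : G.Connected)
    (hcard : 3 ≤ Fintype.card V) (v z : V)
    (hdv : G.degree v = 1) (hz : G.neighborSet v = {z}) (hdz : 2 ≤ G.degree z) :
    invDeg (G.induce {u | u ≠ v}) ≤ invDeg G - 1 / 2 ∧
      G.diam ≤ (G.induce {u | u ≠ v}).diam + 1 :=
  remove_degree_one_vertex_general G hconn v z hdv hz hdz
end

section
/- Let G be a connected graph, v a degree-2 vertex whose two neighbours a, b are adjacent and each have degree at least 3, with v not an endpoint of any diameter path. Then for G' = G \ {v}: G' is connected, D(G') ≥ D(G), and r(G') ≤ r(G) - 1/2 + 1/3. -/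
open Finset

namespace SimpleGraph

variable {V : Type*} {G : SimpleGraph V}

theorem Reachable.dist_map_le {W : Type*} {H : SimpleGraph W} (f : G →g H) {x y : V}
    (h : G.Reachable x y) : H.dist (f x) (f y) ≤ G.dist x y := by
  obtain ⟨p, hp⟩ := h.exists_walk_length_eq_dist
  calc H.dist (f x) (f y) ≤ (p.map f).length := dist_le _
    _ = G.dist x y := by rw [Walk.length_map, hp]

theorem diam_le_diam_induce [Finite V] {s : Set V} (hs : (G.induce s).Connected) {x y : V}
    (hx : x ∈ s) (hy : y ∈ s) (hxy : G.dist x y = G.diam) : G.diam ≤ (G.induce s).diam :=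
  have := hs.nonempty
  calc G.diam = G.dist x y := hxy.symm
    _ ≤ (G.induce s).dist ⟨x, hx⟩ ⟨y, hy⟩ :=
      (hs ⟨x, hx⟩ ⟨y, hy⟩).dist_map_le (Embedding.induce s).toHom
    _ ≤ (G.induce s).diam := dist_le_diam (connected_iff_ediam_ne_top.mp hs)

theorem Connected.induce_ne_of_isClique_neighborSet (hG : G.Connected) {v a : V} (hva : G.Adj v a)
    (hN : G.IsClique (G.neighborSet v)) : (G.induce {u | u ≠ v}).Connected := by
  classical
  set H := G.induce {u | u ≠ v}
  let f : V → {u | u ≠ v} := fun u => if h : u = v then ⟨a, hva.ne'⟩ else ⟨u, h⟩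
  have hf : ∀ u (hu : u ≠ v), f u = ⟨u, hu⟩ := fun u hu => dif_neg hu
  -- Retracting `v` onto `a` sends each edge at `v` to an edge of the clique or to a point.
  have hnbr : ∀ w (hvw : G.Adj v w), H.Reachable (f v) (f w) := by
    intro w hvw
    rw [hf w hvw.ne', show f v = ⟨a, hva.ne'⟩ from dif_pos rfl]
    by_cases haw : a = w
    · subst haw; rfl
    · exact Adj.reachable (hN hva hvw haw)
  have hstep : ∀ x y, G.Adj x y → H.Reachable (f x) (f y) := by
    intro x y hxy
    by_cases hx : x = v
    · subst hx; exact hnbr y hxy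
    by_cases hy : y = v
    · subst hy; exact (hnbr x hxy.symm).symm
    rw [hf x hx, hf y hy]
    exact Adj.reachable hxy
  have hmap : ∀ x y, G.Reachable x y → H.Reachable (f x) (f y) := by
    rintro x y ⟨p⟩
    induction p with
    | nil => rfl
    | cons h _ ih => exact (hstep _ _ h).trans ih
  have : Nonempty {u | u ≠ v} := ⟨⟨a, hva.ne'⟩⟩
  refine ⟨fun x y => ?_⟩
  simpa only [hf x x.2, hf y y.2] using hmap x y (hG x y)

theorem degree_induce_ne_s13 [Fintype V] [DecidableEq V] [DecidableRel G.Adj] {v : V}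
    (w : {u | u ≠ v}) :
    (G.induce {u | u ≠ v}).degree w = if G.Adj v w then G.degree w - 1 else G.degree w := by
  rw [← card_neighborFinset_eq_degree, ← card_map, map_neighborFinset_induce]
  have : G.neighborFinset w ∩ {u | u ≠ v}.toFinset = (G.neighborFinset w).erase v := by
    ext; simp [and_comm]
  rw [this, card_erase_eq_ite]
  simp [adj_comm]

theorem invDeg_eq_sum [Fintype V] [DecidableRel G.Adj] :
    invDeg G = ∑ v, 1 / (G.degree v : ℝ) := by
  unfold invDeg
  congr!

theorem invDeg_induce_ne [Fintype V] [DecidableEq V] [DecidableRel G.Adj] (v : V) :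
    invDeg (G.induce {u | u ≠ v}) = invDeg G - 1 / G.degree v +
      ∑ w ∈ G.neighborFinset v, (1 / ((G.degree w : ℝ) - 1) - 1 / G.degree w) := by
  set F : V → ℝ := fun w =>
    1 / (G.degree w : ℝ) + if G.Adj v w then 1 / ((G.degree w : ℝ) - 1) - 1 / G.degree w else 0
  have hF : ∀ w : {u | u ≠ v}, 1 / ((G.induce {u | u ≠ v}).degree w : ℝ) = F w := by
    intro w
    by_cases h : G.Adj v w
    · simp only [degree_induce_ne_s13, F, if_pos h, Nat.cast_pred h.degree_pos_right]
      ring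
    · simp only [degree_induce_ne_s13, F, if_neg h, add_zero]
  rw [invDeg_eq_sum, invDeg_eq_sum]
  calc ∑ w : {u | u ≠ v}, 1 / ((G.induce {u | u ≠ v}).degree w : ℝ)
      = ∑ w ∈ univ.erase v, F w := by
        rw [sum_subtype _ (p := fun u => u ≠ v) (by simp) F]; exact sum_congr rfl fun w _ => hF w
    _ = ∑ w, F w - F v := sum_erase_eq_sub (mem_univ v)
    _ = _ := by
        simp only [F, one_div, sum_add_distrib, ← sum_filter, sum_sub_distrib, SimpleGraph.irrefl,
          ↓reduceIte, add_zero, neighborFinset_eq_filter]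
        ring

end SimpleGraph

theorem one_div_sub_one_sub_one_div_le {x : ℝ} (hx : 3 ≤ x) : 1 / (x - 1) - 1 / x ≤ 1 / 6 := by
  have hx1 : 0 < x - 1 := by linarith
  rw [div_sub_div _ _ hx1.ne' (by positivity : x ≠ 0), div_le_div_iff₀ (by positivity) (by norm_num)]
  nlinarith

theorem remove_degree_two_vertex {V : Type*} [Fintype V] [DecidableEq V]
    (G : SimpleGraph V) [DecidableRel G.Adj] (hconn : G.Connected)
    (v a b : V) (hdv : G.degree v = 2) (hnb : G.neighborSet v = {a, b})
    (hab : G.Adj a b) (hda : 3 ≤ G.degree a) (hdb : 3 ≤ G.degree b)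
    (hnotend : ∀ u : V, G.dist u v < G.diam) :
    (G.induce {u | u ≠ v}).Connected ∧
      G.diam ≤ (G.induce {u | u ≠ v}).diam ∧
      invDeg (G.induce {u | u ≠ v}) ≤ invDeg G - 1 / 2 + 1 / 3 := by
  have hva : G.Adj v a := by simp [← SimpleGraph.mem_neighborSet, hnb]
  have hnbr : ∀ w, G.Adj v w → w = a ∨ w = b := by simp [← SimpleGraph.mem_neighborSet, hnb]
  have hconn' : (G.induce {u | u ≠ v}).Connected :=
    hconn.induce_ne_of_isClique_neighborSet hva (hnb ▸ SimpleGraph.isClique_pair.mpr fun _ => hab)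
  refine ⟨hconn', ?_, ?_⟩
  · have : Nonempty V := ⟨v⟩
    obtain ⟨x, y, hxy⟩ := G.exists_dist_eq_diam
    have hx : x ≠ v := by rintro rfl; exact (hnotend y).ne (G.dist_comm ▸ hxy)
    have hy : y ≠ v := by rintro rfl; exact (hnotend x).ne hxy
    exact G.diam_le_diam_induce hconn' hx hy hxy
  · have hloss : ∑ w ∈ G.neighborFinset v, (1 / ((G.degree w : ℝ) - 1) - 1 / G.degree w) ≤
        2 • (1 / 6) := by
      rw [← hdv, ← G.card_neighborFinset_eq_degree]
      refine sum_le_card_nsmul _ _ _ fun w hw => one_div_sub_one_sub_one_div_le ?_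
      rcases hnbr w ((G.mem_neighborFinset v w).mp hw) with rfl | rfl <;> exact_mod_cast ‹_›
    rw [G.invDeg_induce_ne, hdv]
    norm_num at hloss ⊢
    linarith
end
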